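/- The global function f_X of the sand automaton X is not P-injective (hence not injective): the two periodic configurations c with c_{2i} = 0, c_{2i+1} = 1 for all i, and c' with c'_{2i} = 0, c'_{2i+1} = 2 for all i, are distinct and satisfy f_X(c) = f_X(c') = c. -/

import Mathlib

/-!
Under `X`, a site whose second left neighbour has the same height loses a grain exactly when
its left neighbour is two units lower. In the 2-periodic configuration `0, 1, 0, 1, …` no site
sees such a drop, so it is fixed; in `0, 2, 0, 2, …` exactly the sites of height `2` do, so it
falls onto `0, 1, 0, 1, …`.
-/

/-- The extended integers `ℤ ∪ {-∞, +∞}`. -/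
abbrev EZ : Type := WithBot (WithTop ℤ)

/-- Embedding of `ℤ` into the extended integers. -/
def finVal (n : ℤ) : EZ := ((n : WithTop ℤ) : EZ)

/-- The integer value of a finite extended integer (`0` on `±∞`). -/
def valZ (x : EZ) : ℤ := WithBot.recBotCoe 0 (fun y => WithTop.recTopCoe 0 id y) x

/-- The measuring device `β_l^m`. -/
noncomputable def beta (l : ℕ) (m : ℤ) (n : EZ) : EZ :=
  if finVal (m + (l : ℤ)) < n then ⊤
  else if n < finVal (m - (l : ℤ)) then ⊥
  else WithBot.map (WithTop.map (fun k => k - m)) n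

/-- Reference height: the value of `x` if finite, `0` if `x = ±∞`. -/
def refH (x : EZ) : ℤ := if x = ⊥ ∨ x = ⊤ then 0 else valZ x

/-- One-dimensional sandpile configurations. -/
abbrev Config : Type := ℤ → EZ

/-- The neighborhood sequence `d_r^i(c)`: the `2r`-tuple of measured differences. -/
noncomputable def nbhd (r : ℕ) (c : Config) (i : ℤ) : Fin (2 * r) → EZ :=
  fun j => beta r (refH (c i))
    (c (i + (if (j : ℕ) < r then ((j : ℕ) : ℤ) - (r : ℤ) else ((j : ℕ) : ℤ) - (r : ℤ) + 1)))

/-- The global function of the sand automaton of radius `r` with local rule `lam`. -/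
noncomputable def globalF (r : ℕ) (lam : (Fin (2 * r) → EZ) → ℤ) (c : Config) : Config :=
  fun i => if c i = ⊥ ∨ c i = ⊤ then c i
    else finVal (valZ (c i) + lam (nbhd r c i))

/-- Finite configurations. -/
def FiniteConf (c : Config) : Prop := ∃ k : ℕ, ∀ i : ℤ, (k : ℤ) ≤ |i| → c i = finVal 0

/-- Periodic configurations. -/
def PeriodicConf (c : Config) : Prop := ∃ p : ℤ, p ≠ 0 ∧ ∀ i : ℤ, c (i + p) = c i


/-- The local rule of the sand automaton `X` (radius 2, arguments `(a,b,x,y)`):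
returns `-1` on `(+∞,-,-,-)`, `(2,-,-,-)`, `(1,-1,-,-)`, `(1,-2,-,-)`, `(1,-∞,-,-)`,
`(0,-2,-,-)`, `(0,-∞,-,-)`, and `0` otherwise. -/
def lamX (v : Fin 4 → EZ) : ℤ :=
  if v 0 = ⊤ ∨ v 0 = finVal 2 then -1
  else if v 0 = finVal 1 ∧ (v 1 = finVal (-1) ∨ v 1 = finVal (-2) ∨ v 1 = ⊥) then -1
  else if v 0 = finVal 0 ∧ (v 1 = finVal (-2) ∨ v 1 = ⊥) then -1
  else 0

@[simp] lemma finVal_inj {a b : ℤ} : finVal a = finVal b ↔ a = b := by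
  simp [finVal]

@[simp] lemma finVal_ne_bot (n : ℤ) : finVal n ≠ ⊥ := by simp [finVal]

@[simp] lemma finVal_ne_top (n : ℤ) : finVal n ≠ ⊤ := by simp [finVal]

@[simp] lemma finVal_lt_finVal {a b : ℤ} : finVal a < finVal b ↔ a < b := by
  simp [finVal]

@[simp] lemma valZ_finVal (n : ℤ) : valZ (finVal n) = n := rfl

@[simp] lemma refH_finVal (n : ℤ) : refH (finVal n) = n := by simp [refH]

lemma beta_finVal_of_abs_sub_le {l : ℕ} {m n : ℤ} (h : |n - m| ≤ l) :
    beta l m (finVal n) = finVal (n - m) := by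
  rw [abs_le] at h
  simp only [beta, finVal_lt_finVal, show ¬ m + (l : ℤ) < n by omega,
    show ¬ n < m - (l : ℤ) by omega, if_false]
  rfl

lemma globalF_lamX_apply {c : Config} {i m n : ℤ} (hi : c i = finVal m)
    (hi₂ : c (i - 2) = finVal m) (hi₁ : c (i - 1) = finVal n) (hmn : |n - m| ≤ 2) :
    globalF 2 lamX c i = finVal (if n - m = -2 then m - 1 else m) := by
  have h₀ : nbhd 2 c i 0 = finVal 0 := by
    simpa [nbhd, hi, ← sub_eq_add_neg, hi₂] using
      beta_finVal_of_abs_sub_le (l := 2) (m := m) (n := m) (by simp)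
  have h₁ : nbhd 2 c i 1 = finVal (n - m) := by
    simpa [nbhd, hi, ← sub_eq_add_neg, hi₁] using beta_finVal_of_abs_sub_le (l := 2) hmn
  simp only [globalF, hi, finVal_ne_bot, finVal_ne_top, or_self, ↓reduceIte, valZ_finVal, lamX,
    h₀, h₁, finVal_inj, OfNat.zero_ne_ofNat, zero_ne_one, or_false, false_and, true_and]
  split_ifs <;> omega

def alternating (a b : ℤ) : Config := fun i => if Even i then finVal a else finVal b

section alternating

variable {a b : ℤ}

lemma alternating_add_two (i : ℤ) : alternating a b (i + 2) = alternating a b i := by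
  simp [alternating]

lemma alternating_sub_one (i : ℤ) : alternating a b (i - 1) = alternating b a i := by
  by_cases h : Even i <;> simp [alternating, h]

lemma periodicConf_alternating : PeriodicConf (alternating a b) :=
  ⟨2, two_ne_zero, alternating_add_two⟩

lemma eq_alternating_of_forall {c : Config}
    (hc : ∀ i : ℤ, c (2 * i) = finVal a ∧ c (2 * i + 1) = finVal b) : c = alternating a b := by
  funext i
  obtain ⟨k, rfl | rfl⟩ := Int.even_or_odd' i <;> simp [alternating, hc]

lemma globalF_lamX_alternating (hab : |b - a| ≤ 2) :
    globalF 2 lamX (alternating a b) =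
      alternating (if b - a = -2 then a - 1 else a) (if a - b = -2 then b - 1 else b) := by
  have hba : |a - b| ≤ 2 := by rwa [abs_sub_comm]
  funext i
  have h₂ : alternating a b (i - 2) = alternating a b i := by
    simpa using (alternating_add_two (a := a) (b := b) (i - 2)).symm
  by_cases h : Even i
  · have hi : alternating a b i = finVal a := if_pos h
    rw [globalF_lamX_apply hi (h₂.trans hi) ((alternating_sub_one i).trans (if_pos h)) hab]
    exact (if_pos h).symm
  · have hi : alternating a b i = finVal b := if_neg h
    rw [globalF_lamX_apply hi (h₂.trans hi) ((alternating_sub_one i).trans (if_neg h)) hba]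
    exact (if_neg h).symm

end alternating

/-- `f_X` is not `P`-injective (hence not injective): the two periodic configurations
`c` (with `c_{2i} = 0`, `c_{2i+1} = 1`) and `c'` (with `c'_{2i} = 0`, `c'_{2i+1} = 2`)
are distinct and satisfy `f_X(c) = f_X(c') = c`. -/
theorem X_not_P_injective (c c' : Config)
    (hc : ∀ i : ℤ, c (2 * i) = finVal 0 ∧ c (2 * i + 1) = finVal 1)
    (hc' : ∀ i : ℤ, c' (2 * i) = finVal 0 ∧ c' (2 * i + 1) = finVal 2) :
    c ≠ c' ∧ PeriodicConf c ∧ PeriodicConf c' ∧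
    globalF 2 lamX c = c ∧ globalF 2 lamX c' = c ∧
    ¬ Set.InjOn (globalF 2 lamX) {x : Config | PeriodicConf x} ∧
    ¬ Function.Injective (globalF 2 lamX) := by
  obtain rfl := eq_alternating_of_forall hc
  obtain rfl := eq_alternating_of_forall hc'
  have hne : alternating 0 1 ≠ alternating 0 2 := fun h => by
    simpa [alternating] using congrFun h 1
  have hfix : globalF 2 lamX (alternating 0 1) = alternating 0 1 := by
    simpa using globalF_lamX_alternating (a := 0) (b := 1) (by norm_num)
  have hmerge : globalF 2 lamX (alternating 0 2) = alternating 0 1 := by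
    simpa using globalF_lamX_alternating (a := 0) (b := 2) (by norm_num)
  have hcollide := hfix.trans hmerge.symm
  exact ⟨hne, periodicConf_alternating, periodicConf_alternating, hfix, hmerge,
    fun hinj => hne (hinj periodicConf_alternating periodicConf_alternating hcollide),
    fun hinj => hne (hinj hcollide)⟩
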